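/- arXiv:2504.07809 — 5 statements merged into one kernel-verified Lean document; each statement's English description precedes it below -/
import Mathlib

section
/- Let A(x) = A₀ + Σ_{i=1}^ℓ x_i A_i with A₀, …, A_ℓ n×n real symmetric matrices, and let B be the Gram matrix B_{ij} = ⟨A_i, A_j⟩_F. Fix x ∈ ℝ^ℓ, vectors q₁, …, q_m ∈ ℝ^n, and real numbers r₁, …, r_m, and set Z = A(x) − Σ_{k=1}^m r_k q_k q_kᵀ. Define c ∈ ℝ^ℓ by c_j = ⟨Z − A₀, A_j⟩_F, the Jacobian J ∈ ℝ^{m×ℓ} by J_{kj} = q_kᵀ A_j q_k, and r = (r₁,…,r_m)ᵀ. Then c = B x − Jᵀ r. Consequently, if B is invertible, the unique solution x⁺ of B x⁺ = c is x⁺ = x − B⁻¹ Jᵀ r; that is, the projection step of the Lift and Projection method coincides with the step x⁺ = x − B⁻¹ ∇F(x) where ∇F = Jᵀ r. -/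
open Matrix

lemma trace_vecMulVec_mul {n : ℕ} (u v : Fin n → ℝ) (M : Matrix (Fin n) (Fin n) ℝ) :
    ((vecMulVec u v)ᵀ * M).trace = u ⬝ᵥ M *ᵥ v := by
  simp only [Matrix.trace, Matrix.diag, Matrix.mul_apply, Matrix.transpose_apply,
    vecMulVec_apply, dotProduct, mulVec, Finset.mul_sum]
  rw [Finset.sum_comm]
  apply Finset.sum_congr rfl; intro i _
  apply Finset.sum_congr rfl; intro j _
  ring

/-- equivalence of the projection step and the gradient step:
with `Z = A(x) − ∑ r_k q_k q_kᵀ`, `c_j = ⟨Z − A₀, A_j⟩_F`, `J_{kj} = q_kᵀ A_j q_k`,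
one has `c = B x − Jᵀ r`; consequently, if `B` is invertible the unique solution of
`B x⁺ = c` is `x⁺ = x − B⁻¹ Jᵀ r`. -/
theorem projection_step_is_gradient_step {n m ℓ : ℕ}
    (A₀ : Matrix (Fin n) (Fin n) ℝ) (A : Fin ℓ → Matrix (Fin n) (Fin n) ℝ)
    (hA₀ : A₀.IsSymm) (hA : ∀ i, (A i).IsSymm)
    (B : Matrix (Fin ℓ) (Fin ℓ) ℝ)
    (hB : ∀ i j, B i j = ((A i)ᵀ * A j).trace)
    (x : Fin ℓ → ℝ) (q : Fin m → Fin n → ℝ) (r : Fin m → ℝ)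
    (Z : Matrix (Fin n) (Fin n) ℝ)
    (hZ : Z = (A₀ + ∑ i, x i • A i) - ∑ k, r k • vecMulVec (q k) (q k))
    (c : Fin ℓ → ℝ) (hc : ∀ j, c j = ((Z - A₀)ᵀ * A j).trace)
    (J : Matrix (Fin m) (Fin ℓ) ℝ)
    (hJ : ∀ k j, J k j = q k ⬝ᵥ (A j) *ᵥ q k) :
    c = B *ᵥ x - Jᵀ *ᵥ r ∧
    (IsUnit B → ∀ y : Fin ℓ → ℝ,
      B *ᵥ y = c ↔ y = x - B⁻¹ *ᵥ (Jᵀ *ᵥ r)) := by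
  have key : c = B *ᵥ x - Jᵀ *ᵥ r := by
    funext j
    have h1 : Z - A₀ = (∑ i, x i • A i) - ∑ k, r k • vecMulVec (q k) (q k) := by
      rw [hZ]; abel
    have hBsym : ∀ i j, B i j = B j i := by
      intro i j
      rw [hB, hB, ← Matrix.trace_transpose ((A i)ᵀ * A j), Matrix.transpose_mul,
        Matrix.transpose_transpose]
    rw [hc, h1]
    simp only [Matrix.transpose_sub, Matrix.transpose_sum, Matrix.transpose_smul,
      Matrix.sub_mul, Finset.sum_mul, Matrix.smul_mul, Matrix.trace_sub,
      Matrix.trace_sum, Matrix.trace_smul, smul_eq_mul]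
    have htr : ∀ i, ((A i)ᵀ * A j).trace = B j i := fun i => by
      rw [hB, ← Matrix.trace_transpose ((A j)ᵀ * A i), Matrix.transpose_mul,
        Matrix.transpose_transpose]
    have hvv : ∀ k : Fin m, ((vecMulVec (q k) (q k))ᵀ * A j).trace = J k j :=
      fun k => by rw [trace_vecMulVec_mul, hJ]
    simp only [htr, hvv, Pi.sub_apply, Matrix.mulVec, dotProduct, Matrix.transpose_apply]
    congr 1
    · exact Finset.sum_congr rfl fun i _ => mul_comm _ _
    · exact Finset.sum_congr rfl fun k _ => mul_comm _ _
  refine ⟨key, ?_⟩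
  intro hU y
  have hinv : B⁻¹ * B = 1 := nonsing_inv_mul B (isUnit_iff_isUnit_det B |>.mp hU)
  have hinv2 : B * B⁻¹ = 1 := mul_nonsing_inv B (isUnit_iff_isUnit_det B |>.mp hU)
  constructor
  · intro h
    have := congrArg (fun v => B⁻¹ *ᵥ v) h
    simp only [mulVec_mulVec] at this
    rw [hinv, one_mulVec] at this
    rw [this, key, mulVec_sub, mulVec_mulVec, hinv, one_mulVec]
  · intro h
    rw [h, key, mulVec_sub, mulVec_mulVec, mulVec_mulVec, hinv2, Matrix.one_mul]
end

section
/- Let A₁, …, A_ℓ be n×n real symmetric matrices and Ã(v) = Σ_{i=1}^ℓ v_i A_i. Let q₁, …, q_m ∈ ℝ^n, let μ₁ ≤ … ≤ μ_m and λ*₁ ≤ … ≤ λ*_m be real numbers, set r_k = μ_k − λ*_k, let J ∈ ℝ^{m×ℓ} have entries J_{kj} = q_kᵀ A_j q_k, and define H = Jᵀ J + Σ_{k=1}^m r_k H^{(k)} where (H^{(k)})_{ij} = 2 Σ_{t=1, μ_t ≠ μ_k}^m (q_tᵀ A_i q_k)(q_tᵀ A_j q_k)/(μ_k − μ_t). Then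 for every v ∈ ℝ^ℓ, vᵀ H v = Σ_{k=1}^m (q_kᵀ Ã(v) q_k)² + 2 Σ_{k=1}^m Σ_{t<k, μ_t < μ_k} (1 − (λ*_k − λ*_t)/(μ_k − μ_t)) (q_tᵀ Ã(v) q_k)². -/
open Matrix

lemma aux_dot_sum {α n : Type*} [Fintype α] [Fintype n] (v : α → ℝ)
    (A : α → Matrix n n ℝ) (x y : n → ℝ) :
    x ⬝ᵥ (∑ i, v i • A i) *ᵥ y = ∑ i, v i * (x ⬝ᵥ (A i) *ᵥ y) := by
  simp only [dotProduct, Matrix.mulVec, Matrix.sum_apply, Matrix.smul_apply,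
    smul_eq_mul, Finset.sum_mul, Finset.mul_sum]
  rw [Finset.sum_congr rfl fun j (_ : j ∈ Finset.univ) => Finset.sum_comm, Finset.sum_comm]
  refine Finset.sum_congr rfl fun i _ => Finset.sum_congr rfl fun j _ =>
    Finset.sum_congr rfl fun l _ => by ring

/-- expansion of the Hessian quadratic form
`vᵀ H v = ∑_k (q_kᵀ Ã(v) q_k)² + 2 ∑_k ∑_{t<k, μ_t<μ_k} (1 − (λ*_k−λ*_t)/(μ_k−μ_t)) (q_tᵀ Ã(v) q_k)²`,
where `H = Jᵀ J + ∑_k r_k H^{(k)}` is the Hessian of the least squares objective. -/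
theorem hessian_quadratic_form_expansion {n m ℓ : ℕ}
    (A : Fin ℓ → Matrix (Fin n) (Fin n) ℝ) (hA : ∀ i, (A i).IsSymm)
    (q : Fin m → Fin n → ℝ)
    (μ lamStar : Fin m → ℝ) (hμ : Monotone μ) (hlamStar : Monotone lamStar)
    (r : Fin m → ℝ) (hr : ∀ k, r k = μ k - lamStar k)
    (J : Matrix (Fin m) (Fin ℓ) ℝ)
    (hJ : ∀ k j, J k j = q k ⬝ᵥ (A j) *ᵥ q k)
    (Hk : Fin m → Matrix (Fin ℓ) (Fin ℓ) ℝ)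
    (hHk : ∀ k i j, Hk k i j =
      2 * ∑ t ∈ Finset.univ.filter (fun t => μ t ≠ μ k),
        (q t ⬝ᵥ (A i) *ᵥ q k) * (q t ⬝ᵥ (A j) *ᵥ q k) / (μ k - μ t))
    (H : Matrix (Fin ℓ) (Fin ℓ) ℝ)
    (hH : H = Jᵀ * J + ∑ k, r k • Hk k)
    (v : Fin ℓ → ℝ) :
    v ⬝ᵥ H *ᵥ v
      = ∑ k, (q k ⬝ᵥ (∑ i, v i • A i) *ᵥ q k) ^ 2
        + 2 * ∑ k, ∑ t ∈ Finset.univ.filter (fun t => t < k ∧ μ t < μ k),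
            (1 - (lamStar k - lamStar t) / (μ k - μ t))
              * (q t ⬝ᵥ (∑ i, v i • A i) *ᵥ q k) ^ 2 := by
  classical
  set B : Matrix (Fin n) (Fin n) ℝ := ∑ i, v i • A i with hBdef
  -- linearity of the bilinear form
  have hw : ∀ t k : Fin m, q t ⬝ᵥ B *ᵥ q k = ∑ i, v i * (q t ⬝ᵥ (A i) *ᵥ q k) := by
    intro t k
    rw [hBdef]
    exact aux_dot_sum v A (q t) (q k)
  -- B is symmetric
  have hBsymm : Bᵀ = B := by
    simp only [hBdef, Matrix.transpose_sum, Matrix.transpose_smul]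
    exact Finset.sum_congr rfl fun i _ => by rw [(hA i).eq]
  have hwsym : ∀ t k : Fin m, q t ⬝ᵥ B *ᵥ q k = q k ⬝ᵥ B *ᵥ q t := by
    intro t k
    rw [Matrix.dotProduct_mulVec]
    nth_rewrite 1 [← hBsymm]
    rw [Matrix.vecMul_transpose, dotProduct_comm]
  -- first term
  have h1 : v ⬝ᵥ (Jᵀ * J) *ᵥ v = ∑ k, (q k ⬝ᵥ B *ᵥ q k) ^ 2 := by
    have hJv : ∀ k, (J *ᵥ v) k = q k ⬝ᵥ B *ᵥ q k := by
      intro k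
      rw [hw]
      simp only [Matrix.mulVec, dotProduct, hJ]
      exact Finset.sum_congr rfl fun i _ => mul_comm _ _
    rw [← Matrix.mulVec_mulVec, Matrix.dotProduct_mulVec, Matrix.vecMul_transpose]
    simp [dotProduct, hJv, sq]
  -- second term: decompose
  have h2 : v ⬝ᵥ (∑ k, r k • Hk k) *ᵥ v = ∑ k, r k * (v ⬝ᵥ (Hk k) *ᵥ v) := by
    exact aux_dot_sum r Hk v v
  -- quadratic form of each Hk
  have h3 : ∀ k, v ⬝ᵥ (Hk k) *ᵥ v
      = 2 * ∑ t ∈ Finset.univ.filter (fun t => μ t ≠ μ k),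
          (q t ⬝ᵥ B *ᵥ q k) ^ 2 / (μ k - μ t) := by
    intro k
    have lhs_eq : v ⬝ᵥ (Hk k) *ᵥ v
        = ∑ t ∈ Finset.univ.filter (fun t => μ t ≠ μ k), ∑ i, ∑ j,
            2 * ((v i * (q t ⬝ᵥ (A i) *ᵥ q k)) * (v j * (q t ⬝ᵥ (A j) *ᵥ q k)))
              / (μ k - μ t) := by
      have : v ⬝ᵥ (Hk k) *ᵥ v = ∑ i, ∑ j, v i * (Hk k i j * v j) := by
        simp [dotProduct, Matrix.mulVec, Finset.mul_sum]
      rw [this]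
      simp only [hHk, Finset.mul_sum, Finset.sum_mul]
      rw [Finset.sum_congr rfl fun i (_ : i ∈ Finset.univ) => Finset.sum_comm,
        Finset.sum_comm]
      refine Finset.sum_congr rfl fun t _ => Finset.sum_congr rfl fun i _ =>
        Finset.sum_congr rfl fun j _ => by ring
    rw [lhs_eq, Finset.mul_sum]
    refine Finset.sum_congr rfl fun t _ => ?_
    rw [hw, sq, Finset.sum_mul_sum]
    rw [Finset.sum_div, Finset.mul_sum]
    refine Finset.sum_congr rfl fun i _ => ?_
    rw [Finset.sum_div, Finset.mul_sum]
    exact Finset.sum_congr rfl fun j _ => by ring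
  -- pairing / symmetrization
  have hlt : ∀ t k : Fin m, μ t < μ k → t < k := by
    intro t k h
    by_contra hc
    exact absurd (hμ (not_lt.mp hc)) (not_le.mpr h)
  have hfilter_eq : ∀ k : Fin m,
      Finset.univ.filter (fun t => t < k ∧ μ t < μ k)
        = Finset.univ.filter (fun t => μ t < μ k) := by
    intro k
    apply Finset.filter_congr
    intro t _
    simp only [iff_iff_implies_and_implies]
    exact ⟨fun h => h.2, fun h => ⟨hlt t k h, h⟩⟩
  have hsplit : ∀ k : Fin m,
      Finset.univ.filter (fun t => μ t ≠ μ k)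
        = Finset.univ.filter (fun t => μ t < μ k)
            ∪ Finset.univ.filter (fun t => μ k < μ t) := by
    intro k
    rw [← Finset.filter_or]
    apply Finset.filter_congr
    intro t _
    exact ne_iff_lt_or_gt
  have hdisj : ∀ k : Fin m,
      Disjoint (Finset.univ.filter (fun t => μ t < μ k))
        (Finset.univ.filter (fun t => μ k < μ t)) := by
    intro k
    rw [Finset.disjoint_left]
    intro t ht ht'
    simp only [Finset.mem_filter] at ht ht'
    exact absurd (ht.2.trans ht'.2) (lt_irrefl _)
  -- the symmetrization of the double sum
  have hswap :
      (∑ k, ∑ t ∈ Finset.univ.filter (fun t => μ k < μ t),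
          r k * ((q t ⬝ᵥ B *ᵥ q k) ^ 2 / (μ k - μ t)))
        = ∑ k, ∑ t ∈ Finset.univ.filter (fun t => μ t < μ k),
            r t * ((q k ⬝ᵥ B *ᵥ q t) ^ 2 / (μ t - μ k)) := by
    rw [Finset.sum_comm' (s' := fun t : Fin m => Finset.univ.filter (fun k => μ k < μ t))
      (t' := Finset.univ)]
    intro k t
    simp only [Finset.mem_univ, Finset.mem_filter, true_and, and_true]
  have hmain :
      (∑ k, r k * (v ⬝ᵥ (Hk k) *ᵥ v))
        = 2 * ∑ k, ∑ t ∈ Finset.univ.filter (fun t => t < k ∧ μ t < μ k),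
            (1 - (lamStar k - lamStar t) / (μ k - μ t)) * (q t ⬝ᵥ B *ᵥ q k) ^ 2 := by
    have step1 : (∑ k, r k * (v ⬝ᵥ (Hk k) *ᵥ v))
        = 2 * ∑ k, ∑ t ∈ Finset.univ.filter (fun t => μ t ≠ μ k),
            r k * ((q t ⬝ᵥ B *ᵥ q k) ^ 2 / (μ k - μ t)) := by
      simp only [h3, Finset.mul_sum]
      exact Finset.sum_congr rfl fun k _ => Finset.sum_congr rfl fun t _ => by ring
    rw [step1]
    congr 1
    have step2 : ∀ k, (∑ t ∈ Finset.univ.filter (fun t => μ t ≠ μ k),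
          r k * ((q t ⬝ᵥ B *ᵥ q k) ^ 2 / (μ k - μ t)))
        = (∑ t ∈ Finset.univ.filter (fun t => μ t < μ k),
            r k * ((q t ⬝ᵥ B *ᵥ q k) ^ 2 / (μ k - μ t)))
          + ∑ t ∈ Finset.univ.filter (fun t => μ k < μ t),
              r k * ((q t ⬝ᵥ B *ᵥ q k) ^ 2 / (μ k - μ t)) := by
      intro k
      rw [hsplit k, Finset.sum_union (hdisj k)]
    simp only [step2, Finset.sum_add_distrib, hswap]
    rw [← Finset.sum_add_distrib]
    refine Finset.sum_congr rfl fun k _ => ?_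
    rw [hfilter_eq k, ← Finset.sum_add_distrib]
    refine Finset.sum_congr rfl fun t ht => ?_
    simp only [Finset.mem_filter] at ht
    have hd : μ k - μ t ≠ 0 := sub_ne_zero.mpr (ne_of_gt ht.2)
    have hd' : μ t - μ k ≠ 0 := sub_ne_zero.mpr (ne_of_lt ht.2)
    rw [hwsym k t, hr k, hr t]
    field_simp
    ring
  rw [hH, Matrix.add_mulVec, dotProduct_add, h1, h2, hmain]
end

section
/- (Key Loewner-order lemma.) Let A₁, …, A_ℓ be n×n real symmetric matrices with Gram matrix B_{ij} = ⟨A_i, A_j⟩_F. Let q₁, …, q_m ∈ ℝ^n be orthonormal vectors, let μ₁ ≤ … ≤ μ_m and λ*₁ ≤ … ≤ λ*_m be real numbers, set r_k = μ_k − λ*_k, let J ∈ ℝ^{m×ℓ} have entries J_{kj} = q_kᵀ A_j q_k, and define H = Jᵀ J + Σ_{k=1}^m r_k H^{(k)} where (H^{(k)})_{ij} = 2 Σ_{t=1, μ_t ≠ μ_k}^m (q_tᵀ A_i q_k)(q_tᵀ A_j q_k)/(μ_k − μ_t). Then B − H is positive semidefinite, i.e., vᵀ H v ≤ vᵀ B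 v for all v ∈ ℝ^ℓ. -/
/-!
Fix `v` and put `M = ∑ⱼ vⱼ Aⱼ` and `c t k = q tᵀ M q k`. Every quadratic form in sight is a
weighted sum of squares of these numbers: `vᵀ B v = ‖M‖_F²`, `vᵀ Jᵀ J v = ∑ₖ c k k²` and
`vᵀ H⁽ᵏ⁾ v = ∑_{μ t ≠ μ k} 2 c t k² / (μ k - μ t)`. Since `c` is symmetric, the pairs `(k, t)`
and `(t, k)` of the curvature term contribute together
`2 c t k² (r k - r t) / (μ k - μ t) = 2 c t k² (1 - (λ*k - λ*t) / (μ k - μ t)) ≤ 2 c t k²`,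
because `μ` and `λ*` are sorted the same way. Hence `vᵀ H v ≤ ∑ₖ ∑ₜ c t k²`, and Bessel's
inequality for the orthonormal `q`, applied once to the columns and once to the rows of `M`,
bounds this by `‖M‖_F²`.
-/

open Matrix

section QuadraticForms

variable {ι κ R : Type*} [Fintype ι] [CommSemiring R]

theorem dotProduct_mulVec_eq_sum_mul_sq (s : Finset κ) (w : κ → R) (f : κ → ι → R)
    {N : Matrix ι ι R} (hN : ∀ i j, N i j = ∑ t ∈ s, w t * (f t i * f t j)) (v : ι → R) :
    v ⬝ᵥ N *ᵥ v = ∑ t ∈ s, w t * (f t ⬝ᵥ v) ^ 2 := by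
  simp only [dotProduct, mulVec, hN, sq, Finset.sum_mul, Finset.mul_sum]
  calc _ = ∑ i, ∑ t ∈ s, ∑ j, v i * (w t * (f t i * f t j) * v j) :=
        Finset.sum_congr rfl fun i _ => Finset.sum_comm
    _ = _ := by
        rw [Finset.sum_comm]
        exact Finset.sum_congr rfl fun t _ => Finset.sum_congr rfl fun i _ =>
          Finset.sum_congr rfl fun j _ => by ring

theorem dotProduct_sum_smul_mulVec [Fintype κ] (A : κ → Matrix ι ι R) (v : κ → R)
    (x y : ι → R) : x ⬝ᵥ (∑ j, v j • A j) *ᵥ y = (fun j => x ⬝ᵥ A j *ᵥ y) ⬝ᵥ v := by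
  rw [Matrix.sum_mulVec, dotProduct_sum, dotProduct_comm]
  simp only [smul_mulVec, dotProduct_smul, smul_eq_mul]
  rfl

theorem Matrix.IsSymm.dotProduct_mulVec_comm {A : Matrix ι ι R} (hA : A.IsSymm) (x y : ι → R) :
    x ⬝ᵥ A *ᵥ y = y ⬝ᵥ A *ᵥ x := by
  rw [dotProduct_mulVec, dotProduct_comm, ← mulVec_transpose, hA.eq]

end QuadraticForms

theorem dotProduct_mulVec_eq_sum_sq_of_apply_eq_trace {κ n : Type*} [Fintype κ] [Fintype n]
    (A : κ → Matrix n n ℝ) {B : Matrix κ κ ℝ} (hB : ∀ i j, B i j = ((A i)ᵀ * A j).trace)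
    (v : κ → ℝ) : v ⬝ᵥ B *ᵥ v = ∑ a, ∑ b, (∑ j, v j • A j) a b ^ 2 := by
  have hB' : ∀ i j, B i j = ∑ p : n × n, 1 * (A i p.1 p.2 * A j p.1 p.2) := fun i j => by
    rw [hB, Fintype.sum_prod_type, Finset.sum_comm]
    simp [Matrix.trace, Matrix.mul_apply]
  rw [dotProduct_mulVec_eq_sum_mul_sq Finset.univ (fun _ => 1)
    (fun (p : n × n) i => A i p.1 p.2) hB']
  simp [Fintype.sum_prod_type, Matrix.sum_apply, dotProduct, mul_comm]

section Bessel

variable {ι κ : Type*} [Fintype ι] [Fintype κ] [DecidableEq κ] {q : κ → ι → ℝ}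

theorem sum_sq_dotProduct_le_dotProduct_self
    (hq : ∀ i j, q i ⬝ᵥ q j = if i = j then 1 else 0) (y : ι → ℝ) :
    ∑ t, (q t ⬝ᵥ y) ^ 2 ≤ y ⬝ᵥ y := by
  have hon : Orthonormal ℝ fun t => WithLp.toLp 2 (q t) :=
    orthonormal_iff_ite.2 fun i j => by
      rw [EuclideanSpace.inner_toLp_toLp, star_trivial, dotProduct_comm, hq]
  simpa only [EuclideanSpace.inner_toLp_toLp, star_trivial, Real.norm_eq_abs, sq_abs,
    ← real_inner_self_eq_norm_sq, dotProduct_comm y] using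
    hon.sum_inner_products_le (WithLp.toLp 2 y) (s := Finset.univ)

theorem sum_sum_sq_dotProduct_mulVec_le
    (hq : ∀ i j, q i ⬝ᵥ q j = if i = j then 1 else 0) (M : Matrix ι ι ℝ) :
    ∑ k, ∑ t, (q t ⬝ᵥ M *ᵥ q k) ^ 2 ≤ ∑ a, ∑ b, M a b ^ 2 :=
  calc ∑ k, ∑ t, (q t ⬝ᵥ M *ᵥ q k) ^ 2
      ≤ ∑ k, (M *ᵥ q k) ⬝ᵥ (M *ᵥ q k) :=
        Finset.sum_le_sum fun k _ => sum_sq_dotProduct_le_dotProduct_self hq _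
    _ = ∑ a, ∑ k, (q k ⬝ᵥ M a) ^ 2 := by
        simp only [sq, dotProduct_comm (q _) (M _)]
        exact Finset.sum_comm
    _ ≤ ∑ a, M a ⬝ᵥ M a :=
        Finset.sum_le_sum fun a _ => sum_sq_dotProduct_le_dotProduct_self hq (M a)
    _ = ∑ a, ∑ b, M a b ^ 2 := by simp only [dotProduct, sq]

end Bessel

theorem Finset.add_sum_le_univ_sum_of_notMem {ι N : Type*} [Fintype ι] [DecidableEq ι]
    [AddCommMonoid N] [Preorder N] [AddLeftMono N] {f : ι → N} (hf : ∀ i, 0 ≤ f i)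
    {s : Finset ι} {k : ι} (hk : k ∉ s) : f k + ∑ t ∈ s, f t ≤ ∑ t, f t :=
  (Finset.sum_insert hk).symm.trans_le (Finset.sum_le_univ_sum_of_nonneg hf)

theorem sub_sub_sub_div_sub_le_one {a b p s : ℝ} (h : 0 ≤ (a - b) * (p - s)) :
    ((a - p) - (b - s)) / (a - b) ≤ 1 := by
  have hps : 0 ≤ (p - s) / (a - b) := by
    rcases mul_nonneg_iff.1 h with ⟨hab, hps⟩ | ⟨hab, hps⟩
    · exact div_nonneg hps hab
    · exact div_nonneg_of_nonpos hps hab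
  rw [show (a - p) - (b - s) = (a - b) - (p - s) by ring, sub_div]
  linarith [div_self_le_one (a - b)]

theorem Finset.sum_sum_filter_le_of_add_swap_le {ι : Type*} [Fintype ι] (R : ι → ι → Prop)
    [DecidableRel R] (hR : ∀ k t, R k t → R t k) {g h : ι → ι → ℝ}
    (hgh : ∀ k t, R k t → g k t + g t k ≤ 2 * h k t) :
    ∑ k, ∑ t ∈ univ.filter (R k), g k t ≤ ∑ k, ∑ t ∈ univ.filter (R k), h k t := by
  have hswap : ∑ k, ∑ t ∈ univ.filter (R k), g t k = ∑ k, ∑ t ∈ univ.filter (R k), g k t := by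
    simp only [Finset.sum_filter]
    rw [Finset.sum_comm]
    exact Finset.sum_congr rfl fun k _ => Finset.sum_congr rfl fun t _ =>
      if_congr ⟨hR t k, hR k t⟩ rfl rfl
  have hsum : ∑ k, ∑ t ∈ univ.filter (R k), (g k t + g t k)
      ≤ ∑ k, ∑ t ∈ univ.filter (R k), 2 * h k t :=
    Finset.sum_le_sum fun k _ => Finset.sum_le_sum fun t ht => hgh k t (Finset.mem_filter.1 ht).2
  simp only [Finset.sum_add_distrib, ← Finset.mul_sum, hswap] at hsum
  linarith

theorem Monovary.sum_mul_sum_div_le {ι : Type*} [Fintype ι] {μ lam r : ι → ℝ}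
    (hmono : Monovary μ lam) (hr : ∀ k, r k = μ k - lam k) (c : ι → ι → ℝ)
    (hc : ∀ k t, c k t = c t k) :
    ∑ k, r k * ∑ t ∈ Finset.univ.filter (fun t => μ t ≠ μ k), 2 / (μ k - μ t) * c t k ^ 2
      ≤ ∑ k, ∑ t ∈ Finset.univ.filter (fun t => μ t ≠ μ k), c t k ^ 2 := by
  simp only [Finset.mul_sum]
  refine Finset.sum_sum_filter_le_of_add_swap_le (fun k t => μ t ≠ μ k) (fun _ _ h => Ne.symm h)
    fun k t _ => ?_
  have hpair : r k * (2 / (μ k - μ t) * c t k ^ 2) + r t * (2 / (μ t - μ k) * c k t ^ 2)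
      = 2 * c t k ^ 2 * (((μ k - lam k) - (μ t - lam t)) / (μ k - μ t)) := by
    rw [hr, hr, hc k t, show μ t - μ k = -(μ k - μ t) by ring, div_neg]
    ring
  rw [hpair]
  exact mul_le_of_le_one_right (by positivity)
    (sub_sub_sub_div_sub_le_one (hmono.sub_mul_sub_nonneg t k))

/-- key Loewner-order lemma: `B − H` is positive semidefinite,
i.e. `vᵀ H v ≤ vᵀ B v` for all `v`, where `B` is the Gram matrix of the symmetric basis
matrices `A₁,…,A_ℓ`, the `q_k` are orthonormal, `μ` and `λ*` are sorted, and
`H = Jᵀ J + ∑_k r_k H^{(k)}` is the Hessian of the least squares objective. -/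
theorem gram_sub_hessian_posSemidef {n m ℓ : ℕ}
    (A : Fin ℓ → Matrix (Fin n) (Fin n) ℝ) (hA : ∀ i, (A i).IsSymm)
    (B : Matrix (Fin ℓ) (Fin ℓ) ℝ)
    (hB : ∀ i j, B i j = ((A i)ᵀ * A j).trace)
    (q : Fin m → Fin n → ℝ)
    (hq : ∀ i j, q i ⬝ᵥ q j = if i = j then (1 : ℝ) else 0)
    (μ lamStar : Fin m → ℝ) (hμ : Monotone μ) (hlamStar : Monotone lamStar)
    (r : Fin m → ℝ) (hr : ∀ k, r k = μ k - lamStar k)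
    (J : Matrix (Fin m) (Fin ℓ) ℝ)
    (hJ : ∀ k j, J k j = q k ⬝ᵥ (A j) *ᵥ q k)
    (Hk : Fin m → Matrix (Fin ℓ) (Fin ℓ) ℝ)
    (hHk : ∀ k i j, Hk k i j =
      2 * ∑ t ∈ Finset.univ.filter (fun t => μ t ≠ μ k),
        (q t ⬝ᵥ (A i) *ᵥ q k) * (q t ⬝ᵥ (A j) *ᵥ q k) / (μ k - μ t))
    (H : Matrix (Fin ℓ) (Fin ℓ) ℝ)
    (hH : H = Jᵀ * J + ∑ k, r k • Hk k) :
    ∀ v : Fin ℓ → ℝ, v ⬝ᵥ H *ᵥ v ≤ v ⬝ᵥ B *ᵥ v := by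
  intro v
  set M := ∑ j, v j • A j
  set c : Fin m → Fin m → ℝ := fun t k => q t ⬝ᵥ M *ᵥ q k
  have hc : ∀ t k, (fun j => q t ⬝ᵥ A j *ᵥ q k) ⬝ᵥ v = c t k := fun t k =>
    (dotProduct_sum_smul_mulVec A v _ _).symm
  have hc_symm : ∀ k t, c k t = c t k := fun k t => by
    simp only [← hc, (hA _).dotProduct_mulVec_comm (q k)]
  have hJv : v ⬝ᵥ (Jᵀ * J) *ᵥ v = ∑ k, c k k ^ 2 := by
    rw [dotProduct_mulVec_eq_sum_mul_sq Finset.univ 1 J fun i j => by simp [mul_apply]]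
    simp [← hc, ← hJ]
  have hHkv : ∀ k, v ⬝ᵥ Hk k *ᵥ v
      = ∑ t ∈ Finset.univ.filter (fun t => μ t ≠ μ k), 2 / (μ k - μ t) * c t k ^ 2 := fun k => by
    rw [dotProduct_mulVec_eq_sum_mul_sq _ (fun t => 2 / (μ k - μ t))
      (fun t i => q t ⬝ᵥ A i *ᵥ q k) fun i j => by
        rw [hHk, Finset.mul_sum]
        exact Finset.sum_congr rfl fun t _ => by ring]
    simp only [hc]
  calc v ⬝ᵥ H *ᵥ v
      = ∑ k, c k k ^ 2 + ∑ k, r k *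
          ∑ t ∈ Finset.univ.filter (fun t => μ t ≠ μ k), 2 / (μ k - μ t) * c t k ^ 2 := by
        simp only [hH, add_mulVec, dotProduct_add, sum_mulVec, dotProduct_sum, smul_mulVec,
          dotProduct_smul, smul_eq_mul, hJv, hHkv]
    _ ≤ ∑ k, c k k ^ 2 + ∑ k, ∑ t ∈ Finset.univ.filter (fun t => μ t ≠ μ k), c t k ^ 2 :=
        add_le_add_right ((hμ.monovary hlamStar).sum_mul_sum_div_le hr c hc_symm) _
    _ ≤ ∑ k, ∑ t, c t k ^ 2 := Finset.sum_add_distrib.symm.trans_le <| Finset.sum_le_sum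
        fun k _ => Finset.add_sum_le_univ_sum_of_notMem (fun t => sq_nonneg (c t k)) (by simp)
    _ ≤ ∑ a, ∑ b, M a b ^ 2 := sum_sum_sq_dotProduct_mulVec_le hq M
    _ = v ⬝ᵥ B *ᵥ v := (dotProduct_mulVec_eq_sum_sq_of_apply_eq_trace A hB v).symm
end

section
/- Under the hypotheses of the key Loewner-order lemma (A₁, …, A_ℓ n×n real symmetric with Gram matrix B; q₁, …, q_m orthonormal; μ₁ ≤ … ≤ μ_m; λ*₁ ≤ … ≤ λ*_m; r_k = μ_k − λ*_k; J_{kj} = q_kᵀ A_j q_k; H = Jᵀ J + Σ_k r_k H^{(k)} with (H^{(k)})_{ij} = 2 Σ_{t: μ_t ≠ μ_k} (q_tᵀ A_i q_k)(q_tᵀ A_j q_k)/(μ_k − μ_t)), one has the quantitative lower bound: for every v ∈ ℝ^ℓ, vᵀ (B − H) v ≥ 2 Σ_{k=1}^m Σ_{t<k, μ_t = μ_k} (q_tᵀ Ã(v) q_k)², where Ã(v) = Σ_{i=1}^ℓ v_i A_i. -/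
open Matrix


private lemma trace_transpose_mul_self_nonneg {n k : ℕ} (M : Matrix (Fin n) (Fin k) ℝ) :
    0 ≤ (Mᵀ * M).trace := by
  simp only [Matrix.trace, Matrix.diag, Matrix.mul_apply, Matrix.transpose_apply]
  exact Finset.sum_nonneg fun i _ => Finset.sum_nonneg fun x _ => mul_self_nonneg _

private lemma proj_trace_le {n m k : ℕ} (Q : Matrix (Fin n) (Fin m) ℝ) (hQ : Qᵀ * Q = 1)
    (N : Matrix (Fin n) (Fin k) ℝ) :
    ((Qᵀ * N)ᵀ * (Qᵀ * N)).trace ≤ (Nᵀ * N).trace := by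
  set P := Q * Qᵀ with hP
  have hPsymm : Pᵀ = P := by simp [hP, Matrix.transpose_mul]
  have hPP : P * P = P := by
    rw [hP]
    calc Q * Qᵀ * (Q * Qᵀ) = Q * (Qᵀ * Q) * Qᵀ := by
          rw [Matrix.mul_assoc, Matrix.mul_assoc, Matrix.mul_assoc]
        _ = Q * Qᵀ := by rw [hQ, Matrix.mul_one]
  have h1 : ((1 - P) * N)ᵀ * ((1 - P) * N) = Nᵀ * N - Nᵀ * P * N := by
    have h2 : (1 - P) * (1 - P) = 1 - P := by
      simp [Matrix.sub_mul, Matrix.mul_sub, hPP]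
    calc ((1 - P) * N)ᵀ * ((1 - P) * N)
        = Nᵀ * ((1 - P) * ((1 - P) * N)) := by
          rw [Matrix.transpose_mul, Matrix.transpose_sub, Matrix.transpose_one, hPsymm,
            Matrix.mul_assoc]
      _ = Nᵀ * ((1 - P) * (1 - P) * N) := by rw [Matrix.mul_assoc]
      _ = Nᵀ * N - Nᵀ * P * N := by
          rw [h2, Matrix.sub_mul, Matrix.one_mul, Matrix.mul_sub]
          simp [hP, Matrix.mul_assoc]
  have h3 : (Qᵀ * N)ᵀ * (Qᵀ * N) = Nᵀ * P * N := by
    rw [Matrix.transpose_mul, Matrix.transpose_transpose]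
    simp [hP, Matrix.mul_assoc]
  have h4 := trace_transpose_mul_self_nonneg ((1 - P) * N)
  rw [h1, Matrix.trace_sub] at h4
  rw [h3]
  linarith

private lemma sum_swap3 {ι κ σ : Type*} [Fintype ι] [Fintype κ]
    (s : Finset σ) (f : ι → κ → σ → ℝ) :
    ∑ i, ∑ j, ∑ t ∈ s, f i j t = ∑ t ∈ s, ∑ i, ∑ j, f i j t := by
  calc ∑ i, ∑ j, ∑ t ∈ s, f i j t = ∑ i, ∑ t ∈ s, ∑ j, f i j t :=
        Finset.sum_congr rfl fun i _ => Finset.sum_comm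
    _ = ∑ t ∈ s, ∑ i, ∑ j, f i j t := Finset.sum_comm

private lemma quad_sum_factor {ι κ : Type*} [Fintype ι]
    (s : Finset κ) (v : ι → ℝ) (w : κ → ι → ℝ) (c : κ → ℝ) :
    ∑ i, ∑ j, v i * (∑ t ∈ s, c t * (w t i * w t j)) * v j
      = ∑ t ∈ s, c t * (∑ i, v i * w t i) ^ 2 := by
  have h1 : ∀ t ∈ s, c t * (∑ i, v i * w t i) ^ 2
      = ∑ i, ∑ j, v i * (c t * (w t i * w t j)) * v j := by
    intro t _
    rw [sq, Finset.sum_mul_sum, Finset.mul_sum]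
    refine Finset.sum_congr rfl fun i _ => ?_
    rw [Finset.mul_sum]
    exact Finset.sum_congr rfl fun j _ => by ring
  calc ∑ i, ∑ j, v i * (∑ t ∈ s, c t * (w t i * w t j)) * v j
      = ∑ i, ∑ j, ∑ t ∈ s, v i * (c t * (w t i * w t j)) * v j := by
        refine Finset.sum_congr rfl fun i _ => Finset.sum_congr rfl fun j _ => ?_
        rw [Finset.mul_sum, Finset.sum_mul]
    _ = ∑ t ∈ s, ∑ i, ∑ j, v i * (c t * (w t i * w t j)) * v j := sum_swap3 _ _
    _ = ∑ t ∈ s, c t * (∑ i, v i * w t i) ^ 2 :=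
        Finset.sum_congr rfl fun t ht => (h1 t ht).symm

private lemma quad_sum_factor2 {ι κ₁ κ₂ : Type*} [Fintype ι] [Fintype κ₁] [Fintype κ₂]
    (v : ι → ℝ) (w : κ₁ → κ₂ → ι → ℝ) :
    ∑ i, ∑ j, v i * (∑ x, ∑ a, w x a i * w x a j) * v j
      = ∑ x, ∑ a, (∑ i, v i * w x a i) ^ 2 := by
  have h := quad_sum_factor (Finset.univ : Finset (κ₁ × κ₂)) v (fun p i => w p.1 p.2 i)
      (fun _ => (1 : ℝ))
  simp only [one_mul, Fintype.sum_prod_type] at h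
  exact h


/-- quantitative Loewner bound: under the hypotheses of the key lemma,
`vᵀ (B − H) v ≥ 2 ∑_k ∑_{t<k, μ_t=μ_k} (q_tᵀ Ã(v) q_k)²` for every `v`,
where `Ã(v) = ∑ vᵢ Aᵢ`. -/
theorem gram_sub_hessian_quantitative_bound {n m ℓ : ℕ}
    (A : Fin ℓ → Matrix (Fin n) (Fin n) ℝ) (hA : ∀ i, (A i).IsSymm)
    (B : Matrix (Fin ℓ) (Fin ℓ) ℝ)
    (hB : ∀ i j, B i j = ((A i)ᵀ * A j).trace)
    (q : Fin m → Fin n → ℝ)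
    (hq : ∀ i j, q i ⬝ᵥ q j = if i = j then (1 : ℝ) else 0)
    (μ lamStar : Fin m → ℝ) (hμ : Monotone μ) (hlamStar : Monotone lamStar)
    (r : Fin m → ℝ) (hr : ∀ k, r k = μ k - lamStar k)
    (J : Matrix (Fin m) (Fin ℓ) ℝ)
    (hJ : ∀ k j, J k j = q k ⬝ᵥ (A j) *ᵥ q k)
    (Hk : Fin m → Matrix (Fin ℓ) (Fin ℓ) ℝ)
    (hHk : ∀ k i j, Hk k i j =
      2 * ∑ t ∈ Finset.univ.filter (fun t => μ t ≠ μ k),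
        (q t ⬝ᵥ (A i) *ᵥ q k) * (q t ⬝ᵥ (A j) *ᵥ q k) / (μ k - μ t))
    (H : Matrix (Fin ℓ) (Fin ℓ) ℝ)
    (hH : H = Jᵀ * J + ∑ k, r k • Hk k) :
    ∀ v : Fin ℓ → ℝ,
      2 * ∑ k, ∑ t ∈ Finset.univ.filter (fun t => t < k ∧ μ t = μ k),
          (q t ⬝ᵥ (∑ i, v i • A i) *ᵥ q k) ^ 2
        ≤ v ⬝ᵥ (B - H) *ᵥ v := by
  intro v
  set M : Matrix (Fin n) (Fin n) ℝ := ∑ i, v i • A i with hMdef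
  have hMapp : ∀ a b, M a b = ∑ i, v i * A i a b := by
    intro a b
    rw [hMdef]
    simp [Matrix.sum_apply]
  have hMab : ∀ a b, M a b = M b a := by
    intro a b
    rw [hMdef]
    simp only [Matrix.sum_apply, Matrix.smul_apply, smul_eq_mul]
    exact Finset.sum_congr rfl fun i _ => by rw [(hA i).apply a b]
  set g : Fin m → Fin m → ℝ := fun t k => q t ⬝ᵥ M *ᵥ q k with hgdef
  have hgfold : ∀ t k, q t ⬝ᵥ M *ᵥ q k = g t k := fun _ _ => rfl
  have hdotA : ∀ (N : Matrix (Fin n) (Fin n) ℝ) (t k : Fin m),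
      q t ⬝ᵥ N *ᵥ q k = ∑ a, ∑ b, q t a * N a b * q k b := by
    intro N t k
    simp only [dotProduct, Matrix.mulVec, Finset.mul_sum, mul_assoc]
  have hdot : ∀ t k, g t k = ∑ a, ∑ b, q t a * M a b * q k b := fun t k => hdotA M t k
  have hgsymm : ∀ t k, g t k = g k t := by
    intro t k
    rw [hdot, hdot, Finset.sum_comm]
    refine Finset.sum_congr rfl fun b _ => Finset.sum_congr rfl fun a _ => ?_
    rw [hMab a b]
    ring
  have hlin : ∀ t k, g t k = ∑ i, v i * (q t ⬝ᵥ (A i) *ᵥ q k) := by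
    intro t k
    rw [hdot]
    calc ∑ a, ∑ b, q t a * M a b * q k b
        = ∑ a, ∑ b, ∑ i, v i * (q t a * A i a b * q k b) := by
          refine Finset.sum_congr rfl fun a _ => Finset.sum_congr rfl fun b _ => ?_
          rw [hMapp, Finset.mul_sum, Finset.sum_mul]
          exact Finset.sum_congr rfl fun i _ => by ring
      _ = ∑ i, ∑ a, ∑ b, v i * (q t a * A i a b * q k b) := sum_swap3 _ _
      _ = ∑ i, v i * (q t ⬝ᵥ (A i) *ᵥ q k) := by
          refine Finset.sum_congr rfl fun i _ => ?_
          rw [hdotA, Finset.mul_sum]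
          refine Finset.sum_congr rfl fun a _ => ?_
          rw [Finset.mul_sum]
  have quad : ∀ (N : Matrix (Fin ℓ) (Fin ℓ) ℝ),
      v ⬝ᵥ N *ᵥ v = ∑ i, ∑ j, v i * N i j * v j := by
    intro N
    simp only [dotProduct, Matrix.mulVec, Finset.mul_sum, mul_assoc]
  -- B part
  have hBv : v ⬝ᵥ B *ᵥ v = (Mᵀ * M).trace := by
    rw [quad]
    have hBij : ∀ i j, B i j = ∑ x, ∑ a, A i a x * A j a x := by
      intro i j
      rw [hB]
      simp only [Matrix.trace, Matrix.diag, Matrix.mul_apply, Matrix.transpose_apply]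
    calc ∑ i, ∑ j, v i * B i j * v j
        = ∑ i, ∑ j, v i * (∑ x, ∑ a, A i a x * A j a x) * v j := by
          refine Finset.sum_congr rfl fun i _ => Finset.sum_congr rfl fun j _ => ?_
          rw [hBij]
      _ = ∑ x, ∑ a, (∑ i, v i * A i a x) ^ 2 := quad_sum_factor2 v (fun x a i => A i a x)
      _ = (Mᵀ * M).trace := by
          simp only [Matrix.trace, Matrix.diag, Matrix.mul_apply, Matrix.transpose_apply]
          refine Finset.sum_congr rfl fun x _ => Finset.sum_congr rfl fun a _ => ?_
          rw [hMapp, sq]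
  -- projection bound
  set Q : Matrix (Fin n) (Fin m) ℝ := Matrix.of fun a k => q k a with hQdef
  have hQmul : Qᵀ * Q = 1 := by
    ext i j
    rw [Matrix.mul_apply]
    simp only [Matrix.transpose_apply, hQdef, Matrix.of_apply, Matrix.one_apply]
    simpa [dotProduct] using hq i j
  have hGentry : ∀ t k, (Qᵀ * (M * Q)) t k = g t k := by
    intro t k
    rw [hdot]
    simp only [Matrix.mul_apply, Matrix.transpose_apply, hQdef, Matrix.of_apply,
      Finset.mul_sum, mul_assoc]
  have hproj : ∑ k, ∑ t, g t k ^ 2 ≤ (Mᵀ * M).trace := by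
    have h1 := proj_trace_le Q hQmul (M * Q)
    have h2 : ((M * Q)ᵀ * (M * Q)).trace ≤ (Mᵀ * M).trace := by
      have h := proj_trace_le Q hQmul Mᵀ
      rw [Matrix.transpose_transpose] at h
      calc ((M * Q)ᵀ * (M * Q)).trace
          = ((Qᵀ * Mᵀ) * (Qᵀ * Mᵀ)ᵀ).trace := by
            rw [Matrix.transpose_mul]
            rw [Matrix.transpose_mul, Matrix.transpose_transpose, Matrix.transpose_transpose]
        _ = ((Qᵀ * Mᵀ)ᵀ * (Qᵀ * Mᵀ)).trace := Matrix.trace_mul_comm _ _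
        _ ≤ (M * Mᵀ).trace := h
        _ = (Mᵀ * M).trace := Matrix.trace_mul_comm _ _
    have h3 : ((Qᵀ * (M * Q))ᵀ * (Qᵀ * (M * Q))).trace = ∑ k, ∑ t, g t k ^ 2 := by
      simp only [Matrix.trace, Matrix.diag]
      refine Finset.sum_congr rfl fun k _ => ?_
      rw [Matrix.mul_apply]
      refine Finset.sum_congr rfl fun t _ => ?_
      rw [Matrix.transpose_apply, hGentry, sq]
    rw [← h3]
    exact le_trans h1 h2
  have hBlow : ∑ k, ∑ t, g t k ^ 2 ≤ v ⬝ᵥ B *ᵥ v := by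
    rw [hBv]; exact hproj
  -- H part
  have hJrow : ∀ k, ∑ i, v i * J k i = g k k := by
    intro k
    rw [hlin]
    exact Finset.sum_congr rfl fun i _ => by rw [hJ]
  have hJv : v ⬝ᵥ (Jᵀ * J) *ᵥ v = ∑ k, g k k ^ 2 := by
    rw [quad]
    calc ∑ i, ∑ j, v i * (Jᵀ * J) i j * v j
        = ∑ i, ∑ j, v i * (∑ k, (1 : ℝ) * (J k i * J k j)) * v j := by
          refine Finset.sum_congr rfl fun i _ => Finset.sum_congr rfl fun j _ => ?_
          rw [Matrix.mul_apply]
          congr 1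
          congr 1
          exact Finset.sum_congr rfl fun k _ => by rw [Matrix.transpose_apply]; ring
      _ = ∑ k, (1 : ℝ) * (∑ i, v i * J k i) ^ 2 :=
          quad_sum_factor Finset.univ v (fun k i => J k i) (fun _ => 1)
      _ = ∑ k, g k k ^ 2 := by
          refine Finset.sum_congr rfl fun k _ => ?_
          rw [one_mul, hJrow]
  have hHkv : ∀ k, ∑ i, ∑ j, v i * Hk k i j * v j
      = ∑ t ∈ Finset.univ.filter (fun t => μ t ≠ μ k), (2 / (μ k - μ t)) * g t k ^ 2 := by
    intro k
    calc ∑ i, ∑ j, v i * Hk k i j * v j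
        = ∑ i, ∑ j, v i * (∑ t ∈ Finset.univ.filter (fun t => μ t ≠ μ k),
            (2 / (μ k - μ t)) * ((q t ⬝ᵥ (A i) *ᵥ q k) * (q t ⬝ᵥ (A j) *ᵥ q k))) * v j := by
          refine Finset.sum_congr rfl fun i _ => Finset.sum_congr rfl fun j _ => ?_
          rw [hHk, Finset.mul_sum]
          congr 1
          congr 1
          exact Finset.sum_congr rfl fun t _ => by ring
      _ = ∑ t ∈ Finset.univ.filter (fun t => μ t ≠ μ k),
            (2 / (μ k - μ t)) * (∑ i, v i * (q t ⬝ᵥ (A i) *ᵥ q k)) ^ 2 :=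
          quad_sum_factor _ v (fun t i => q t ⬝ᵥ (A i) *ᵥ q k) (fun t => 2 / (μ k - μ t))
      _ = ∑ t ∈ Finset.univ.filter (fun t => μ t ≠ μ k), (2 / (μ k - μ t)) * g t k ^ 2 := by
          refine Finset.sum_congr rfl fun t _ => ?_
          rw [← hlin]
  have hHsum : v ⬝ᵥ (∑ k, r k • Hk k) *ᵥ v = ∑ k, r k * ∑ i, ∑ j, v i * Hk k i j * v j := by
    rw [quad]
    calc ∑ i, ∑ j, v i * ((∑ k, r k • Hk k) i j) * v j
        = ∑ i, ∑ j, ∑ k, v i * (r k * Hk k i j) * v j := by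
          refine Finset.sum_congr rfl fun i _ => Finset.sum_congr rfl fun j _ => ?_
          rw [Matrix.sum_apply]
          simp only [Matrix.smul_apply, smul_eq_mul]
          rw [Finset.mul_sum, Finset.sum_mul]
      _ = ∑ k, ∑ i, ∑ j, v i * (r k * Hk k i j) * v j := sum_swap3 _ _
      _ = ∑ k, r k * ∑ i, ∑ j, v i * Hk k i j * v j := by
          refine Finset.sum_congr rfl fun k _ => ?_
          rw [Finset.mul_sum]
          refine Finset.sum_congr rfl fun i _ => ?_
          rw [Finset.mul_sum]
          exact Finset.sum_congr rfl fun j _ => by ring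
  have hHv : v ⬝ᵥ H *ᵥ v = (∑ k, g k k ^ 2)
      + ∑ k, r k * ∑ t ∈ Finset.univ.filter (fun t => μ t ≠ μ k),
          (2 / (μ k - μ t)) * g t k ^ 2 := by
    rw [hH, Matrix.add_mulVec, dotProduct_add, hJv, hHsum]
    congr 1
    exact Finset.sum_congr rfl fun k _ => by rw [hHkv]
  have hsub : v ⬝ᵥ (B - H) *ᵥ v = v ⬝ᵥ B *ᵥ v - v ⬝ᵥ H *ᵥ v := by
    rw [Matrix.sub_mulVec, dotProduct_sub]
  -- combinatorial decomposition
  have hdecomp : ∀ k, ∑ t, g t k ^ 2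
      = g k k ^ 2 + (∑ t ∈ Finset.univ.filter (fun t => t ≠ k ∧ μ t = μ k), g t k ^ 2)
        + ∑ t ∈ Finset.univ.filter (fun t => μ t ≠ μ k), g t k ^ 2 := by
    intro k
    rw [← Finset.sum_filter_add_sum_filter_not Finset.univ (fun t => μ t = μ k)
      (fun t => g t k ^ 2)]
    congr 1
    have hk : k ∈ Finset.univ.filter (fun t => μ t = μ k) := by simp
    rw [← Finset.add_sum_erase _ _ hk]
    congr 1
    apply Finset.sum_congr _ fun _ _ => rfl
    ext t
    simp only [Finset.mem_erase, Finset.mem_filter, Finset.mem_univ, true_and]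
  have hDsplit : ∀ k, ∑ t ∈ Finset.univ.filter (fun t => t ≠ k ∧ μ t = μ k), g t k ^ 2
      = (∑ t ∈ Finset.univ.filter (fun t => t < k ∧ μ t = μ k), g t k ^ 2)
        + ∑ t ∈ Finset.univ.filter (fun t => k < t ∧ μ t = μ k), g t k ^ 2 := by
    intro k
    have hset : Finset.univ.filter (fun t => t ≠ k ∧ μ t = μ k)
        = Finset.univ.filter (fun t => t < k ∧ μ t = μ k)
          ∪ Finset.univ.filter (fun t => k < t ∧ μ t = μ k) := by
      ext t
      simp only [Finset.mem_filter, Finset.mem_union, Finset.mem_univ, true_and]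
      constructor
      · rintro ⟨hne, he⟩
        rcases lt_or_gt_of_ne hne with h | h
        · exact Or.inl ⟨h, he⟩
        · exact Or.inr ⟨h, he⟩
      · rintro (⟨h, he⟩ | ⟨h, he⟩)
        · exact ⟨ne_of_lt h, he⟩
        · exact ⟨ne_of_gt h, he⟩
    have hdisj : Disjoint (Finset.univ.filter (fun t => t < k ∧ μ t = μ k))
        (Finset.univ.filter (fun t => k < t ∧ μ t = μ k)) := by
      rw [Finset.disjoint_left]
      intro t ht ht'
      simp only [Finset.mem_filter] at ht ht'
      exact absurd ht'.2.1 (not_lt.mpr (le_of_lt ht.2.1))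
    rw [hset, Finset.sum_union hdisj]
  have hswapgt : ∑ k, ∑ t ∈ Finset.univ.filter (fun t => k < t ∧ μ t = μ k), g t k ^ 2
      = ∑ k, ∑ t ∈ Finset.univ.filter (fun t => t < k ∧ μ t = μ k), g t k ^ 2 := by
    rw [Finset.sum_comm' (s' := fun t => Finset.univ.filter (fun k => k < t ∧ μ t = μ k))
      (t' := Finset.univ)
      (by intro x y; simp only [Finset.mem_filter, Finset.mem_univ, true_and]; tauto)]
    refine Finset.sum_congr rfl fun a _ => ?_
    refine Finset.sum_congr ?_ fun b _ => by rw [hgsymm]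
    ext b
    simp only [Finset.mem_filter, Finset.mem_univ, true_and]
    constructor
    · rintro ⟨h1, h2⟩; exact ⟨h1, h2.symm⟩
    · rintro ⟨h1, h2⟩; exact ⟨h1, h2.symm⟩
  -- the off-diagonal nonnegativity
  set F : Fin m → Fin m → ℝ :=
    fun k t => g t k ^ 2 - r k * ((2 / (μ k - μ t)) * g t k ^ 2) with hFdef
  have hswapW : ∑ k, ∑ t ∈ Finset.univ.filter (fun t => μ t ≠ μ k), F k t
      = ∑ k, ∑ t ∈ Finset.univ.filter (fun t => μ t ≠ μ k), F t k := by
    rw [Finset.sum_comm' (s' := fun t => Finset.univ.filter (fun k => μ t ≠ μ k))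
      (t' := Finset.univ)
      (by intro x y; simp only [Finset.mem_filter, Finset.mem_univ, true_and]; tauto)]
    refine Finset.sum_congr rfl fun a _ => ?_
    refine Finset.sum_congr ?_ fun b _ => rfl
    ext b
    simp only [Finset.mem_filter, Finset.mem_univ, true_and]
    exact ⟨Ne.symm, Ne.symm⟩
  have hterm : ∀ k, ∀ t ∈ Finset.univ.filter (fun t => μ t ≠ μ k), 0 ≤ F k t + F t k := by
    intro k t ht
    simp only [Finset.mem_filter, Finset.mem_univ, true_and] at ht
    have hd : μ k - μ t ≠ 0 := sub_ne_zero.mpr (Ne.symm ht)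
    have hd' : μ t - μ k ≠ 0 := sub_ne_zero.mpr ht
    have hval : F k t + F t k = (2 * (lamStar k - lamStar t) / (μ k - μ t)) * g t k ^ 2 := by
      simp only [hFdef]
      rw [hgsymm k t, hr k, hr t]
      field_simp
      ring
    rw [hval]
    apply mul_nonneg _ (sq_nonneg _)
    rcases lt_or_gt_of_ne ht with hlt | hgt
    · have htk : t ≤ k := le_of_not_gt fun hc => absurd (hμ hc.le) (not_le.mpr hlt)
      have hl := hlamStar htk
      have hdpos : (0 : ℝ) < μ k - μ t := sub_pos.mpr hlt
      apply div_nonneg <;> linarith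
    · have hkt : k ≤ t := le_of_not_gt fun hc => absurd (hμ hc.le) (not_le.mpr hgt)
      have hl := hlamStar hkt
      have hdneg : μ k - μ t < 0 := sub_neg.mpr hgt
      have heq : 2 * (lamStar k - lamStar t) / (μ k - μ t)
          = 2 * (lamStar t - lamStar k) / (μ t - μ k) := by
        rw [← neg_div_neg_eq]
        congr 1 <;> ring
      rw [heq]
      apply div_nonneg <;> linarith
  have hW : 0 ≤ ∑ k, ∑ t ∈ Finset.univ.filter (fun t => μ t ≠ μ k), F k t := by
    have h2W : (∑ k, ∑ t ∈ Finset.univ.filter (fun t => μ t ≠ μ k), F k t)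
        + (∑ k, ∑ t ∈ Finset.univ.filter (fun t => μ t ≠ μ k), F t k)
        = ∑ k, ∑ t ∈ Finset.univ.filter (fun t => μ t ≠ μ k), (F k t + F t k) := by
      rw [← Finset.sum_add_distrib]
      exact Finset.sum_congr rfl fun k _ => by rw [← Finset.sum_add_distrib]
    have hpos : 0 ≤ ∑ k, ∑ t ∈ Finset.univ.filter (fun t => μ t ≠ μ k), (F k t + F t k) :=
      Finset.sum_nonneg fun k _ => Finset.sum_nonneg fun t ht => hterm k t ht
    rw [← h2W, ← hswapW] at hpos
    linarith
  -- assemble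
  have hWsub : ∑ k, ∑ t ∈ Finset.univ.filter (fun t => μ t ≠ μ k), F k t
      = (∑ k, ∑ t ∈ Finset.univ.filter (fun t => μ t ≠ μ k), g t k ^ 2)
        - ∑ k, r k * ∑ t ∈ Finset.univ.filter (fun t => μ t ≠ μ k),
            (2 / (μ k - μ t)) * g t k ^ 2 := by
    rw [← Finset.sum_sub_distrib]
    refine Finset.sum_congr rfl fun k _ => ?_
    rw [Finset.mul_sum, ← Finset.sum_sub_distrib]
  have htotal : ∑ k, ∑ t, g t k ^ 2
      = (∑ k, g k k ^ 2)
        + 2 * ∑ k, ∑ t ∈ Finset.univ.filter (fun t => t < k ∧ μ t = μ k), g t k ^ 2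
        + ∑ k, ∑ t ∈ Finset.univ.filter (fun t => μ t ≠ μ k), g t k ^ 2 := by
    calc ∑ k, ∑ t, g t k ^ 2
        = ∑ k, (g k k ^ 2 + (∑ t ∈ Finset.univ.filter (fun t => t ≠ k ∧ μ t = μ k), g t k ^ 2)
            + ∑ t ∈ Finset.univ.filter (fun t => μ t ≠ μ k), g t k ^ 2) :=
          Finset.sum_congr rfl fun k _ => hdecomp k
      _ = (∑ k, (g k k ^ 2 + ∑ t ∈ Finset.univ.filter (fun t => t ≠ k ∧ μ t = μ k), g t k ^ 2))
            + ∑ k, ∑ t ∈ Finset.univ.filter (fun t => μ t ≠ μ k), g t k ^ 2 :=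
          Finset.sum_add_distrib
      _ = ((∑ k, g k k ^ 2)
            + ∑ k, ∑ t ∈ Finset.univ.filter (fun t => t ≠ k ∧ μ t = μ k), g t k ^ 2)
            + ∑ k, ∑ t ∈ Finset.univ.filter (fun t => μ t ≠ μ k), g t k ^ 2 := by
          rw [Finset.sum_add_distrib]
      _ = (∑ k, g k k ^ 2)
            + 2 * ∑ k, ∑ t ∈ Finset.univ.filter (fun t => t < k ∧ μ t = μ k), g t k ^ 2
            + ∑ k, ∑ t ∈ Finset.univ.filter (fun t => μ t ≠ μ k), g t k ^ 2 := by
          have : ∑ k, ∑ t ∈ Finset.univ.filter (fun t => t ≠ k ∧ μ t = μ k), g t k ^ 2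
              = 2 * ∑ k, ∑ t ∈ Finset.univ.filter (fun t => t < k ∧ μ t = μ k), g t k ^ 2 := by
            rw [Finset.sum_congr rfl fun k _ => hDsplit k, Finset.sum_add_distrib, hswapgt,
              two_mul]
          rw [this]
  -- final
  simp only [hgfold]
  rw [hsub, hHv]
  linarith [hBlow, hW, hWsub, htotal]
end

section
/- (Descent of the doubled Lift and Projection step.) Let F : ℝ^ℓ → ℝ be twice continuously differentiable, let B ∈ ℝ^{ℓ×ℓ} be symmetric positive definite, and suppose vᵀ Hess F(ξ) v ≤ vᵀ B v for all v ∈ ℝ^ℓ and all ξ on the segment between x and x + p, where p = −2 B⁻¹ ∇F(x). Then F(x + p) ≤ F(x). -/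
/-!
Along the line `t ↦ x + t • p` the Hessian bound gives the second-order Taylor estimate
`F (x + p) ≤ F x + g ⬝ p + pᵀ B p / 2` with `g = ∇F(x)`. The doubled step `p = -2 B⁻¹ g` is the
nonzero root of this quadratic model along its direction: `g ⬝ p = -2 gᵀ B⁻¹ g` while
`pᵀ B p / 2 = 2 gᵀ B⁻¹ g`.
-/

open Matrix Set

theorem image_le_taylor_of_second_deriv_le {φ φ' φ'' : ℝ → ℝ} {a b K : ℝ} (hab : a ≤ b)
    (hφ : ∀ t ∈ Icc a b, HasDerivAt φ (φ' t) t)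
    (hφ' : ∀ t ∈ Icc a b, HasDerivAt φ' (φ'' t) t)
    (hK : ∀ t ∈ Ico a b, φ'' t ≤ K) :
    φ b ≤ φ a + φ' a * (b - a) + K * (b - a) ^ 2 / 2 := by
  have hcont {f f' : ℝ → ℝ} (hf : ∀ t ∈ Icc a b, HasDerivAt f (f' t) t) :
      ContinuousOn f (Icc a b) := fun t ht => (hf t ht).continuousAt.continuousWithinAt
  have hright {f f' : ℝ → ℝ} (hf : ∀ t ∈ Icc a b, HasDerivAt f (f' t) t) :
      ∀ t ∈ Ico a b, HasDerivWithinAt f (f' t) (Ici t) t :=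
    fun t ht => (hf t (Ico_subset_Icc_self ht)).hasDerivWithinAt
  have hline (t : ℝ) : HasDerivAt (fun s => φ' a + K * (s - a)) K t := by
    simpa using ((hasDerivAt_id t).sub_const a).const_mul K |>.const_add (φ' a)
  have hparabola (t : ℝ) :
      HasDerivAt (fun s => φ a + φ' a * (s - a) + K * (s - a) ^ 2 / 2) (φ' a + K * (t - a)) t := by
    have h := ((((hasDerivAt_id' t).sub_const a).const_mul (φ' a)).const_add (φ a)).add
      ((((hasDerivAt_id' t).sub_const a).fun_pow 2).const_mul K |>.div_const 2)
    exact h.congr_deriv (by norm_num; ring)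
  have hslope : ∀ t ∈ Icc a b, φ' t ≤ φ' a + K * (t - a) :=
    image_le_of_deriv_right_le_deriv_boundary (hcont hφ') (hright hφ') (by simp)
      (hcont fun t _ => hline t) (fun t _ => (hline t).hasDerivWithinAt) hK
  exact image_le_of_deriv_right_le_deriv_boundary (hcont hφ) (hright hφ) (by simp)
    (hcont fun t _ => hparabola t) (fun t _ => (hparabola t).hasDerivWithinAt)
    (fun t ht => hslope t (Ico_subset_Icc_self ht)) (right_mem_Icc.2 hab)

theorem image_add_le_of_second_fderiv_le {E : Type*} [NormedAddCommGroup E] [NormedSpace ℝ E]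
    {F : E → ℝ} (hF : ContDiff ℝ 2 F) {x p : E} {K : ℝ}
    (hK : ∀ ξ ∈ segment ℝ x (x + p), fderiv ℝ (fun y => fderiv ℝ F y p) ξ p ≤ K) :
    F (x + p) ≤ F x + fderiv ℝ F x p + K / 2 := by
  have hline (t : ℝ) : HasDerivAt (fun s : ℝ => x + s • p) p t := by
    simpa using ((hasDerivAt_id t).smul_const p).const_add x
  have hdir {G : E → ℝ} (hG : Differentiable ℝ G) (t : ℝ) :
      HasDerivAt (fun s => G (x + s • p)) (fderiv ℝ G (x + t • p) p) t :=
    (hG _).hasFDerivAt.comp_hasDerivAt t (hline t)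
  have hF' : Differentiable ℝ fun y => fderiv ℝ F y p :=
    ((hF.fderiv_right (m := 1) le_rfl).clm_apply contDiff_const).differentiable (by norm_num)
  simpa using image_le_taylor_of_second_deriv_le zero_le_one
    (fun t _ => hdir (hF.differentiable (by norm_num)) t) (fun t _ => hdir hF' t)
    (fun t ht => hK _ (segment_eq_image' ℝ x (x + p) ▸ ⟨t, Ico_subset_Icc_self ht, by simp⟩))

theorem two_mul_dotProduct_add_dotProduct_mulVec_eq_zero {n R : Type*} [Fintype n]
    [DecidableEq n] [CommRing R] {B : Matrix n n R} (hB : IsUnit B.det) {g p : n → R}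
    (hp : p = -((2 : R) • (B⁻¹ *ᵥ g))) :
    2 * (p ⬝ᵥ g) + p ⬝ᵥ B *ᵥ p = 0 := by
  subst hp
  simp only [mulVec_neg, mulVec_smul, mulVec_mulVec, mul_nonsing_inv B hB, one_mulVec, neg_dotProduct, dotProduct_neg,
    smul_dotProduct, dotProduct_smul, smul_eq_mul]
  ring

theorem LinearMap.apply_eq_dotProduct_single {ι R : Type*} [Fintype ι] [DecidableEq ι]
    [CommSemiring R] (L : (ι → R) →ₗ[R] R) (v : ι → R) :
    L v = v ⬝ᵥ fun i => L (Pi.single i 1) := by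
  conv_lhs => rw [← Finset.univ_sum_single v]
  simp only [map_sum, dotProduct]
  refine Finset.sum_congr rfl fun i _ => ?_
  rw [← smul_eq_mul, ← map_smul, ← Pi.single_smul', smul_eq_mul, mul_one]

theorem doubled_lift_and_projection_descent_general {ℓ : ℕ}
    (F : (Fin ℓ → ℝ) → ℝ) (hF : ContDiff ℝ 2 F)
    (B : Matrix (Fin ℓ) (Fin ℓ) ℝ) (hBpd : B.PosDef)
    (x : Fin ℓ → ℝ)
    (g : Fin ℓ → ℝ) (hg : ∀ i, g i = fderiv ℝ F x (Pi.single i 1))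
    (p : Fin ℓ → ℝ) (hp : p = -((2 : ℝ) • (B⁻¹ *ᵥ g)))
    (hHess : ∀ ξ ∈ segment ℝ x (x + p), ∀ v : Fin ℓ → ℝ,
        fderiv ℝ (fun y => fderiv ℝ F y v) ξ v ≤ v ⬝ᵥ B *ᵥ v) :
    F (x + p) ≤ F x := by
  have htaylor := image_add_le_of_second_fderiv_le hF fun ξ hξ => hHess ξ hξ p
  have hgrad : fderiv ℝ F x p = p ⬝ᵥ g := by
    rw [← ContinuousLinearMap.coe_coe, LinearMap.apply_eq_dotProduct_single]
    congr 1
    ext i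
    exact (hg i).symm
  have hmodel :=
    two_mul_dotProduct_add_dotProduct_mulVec_eq_zero (B.isUnit_iff_isUnit_det.mp hBpd.isUnit) hp
  linarith

/-- descent of the doubled Lift and Projection step:
if `F` is `C²`, `B` is symmetric positive definite, and `vᵀ Hess F(ξ) v ≤ vᵀ B v` for all
`v` and all `ξ` on the segment from `x` to `x + p`, where `p = −2 B⁻¹ ∇F(x)`, then
`F(x+p) ≤ F(x)`.  The Hessian quadratic form at `ξ` in direction `v` is the directional
derivative `D(y ↦ DF(y)[v])(ξ)[v]`, and the gradient has components `g i = DF(x)[eᵢ]`. -/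
theorem doubled_lift_and_projection_descent {ℓ : ℕ}
    (F : (Fin ℓ → ℝ) → ℝ) (hF : ContDiff ℝ 2 F)
    (B : Matrix (Fin ℓ) (Fin ℓ) ℝ) (hBsymm : B.IsSymm) (hBpd : B.PosDef)
    (x : Fin ℓ → ℝ)
    (g : Fin ℓ → ℝ) (hg : ∀ i, g i = fderiv ℝ F x (Pi.single i 1))
    (p : Fin ℓ → ℝ) (hp : p = -((2 : ℝ) • (B⁻¹ *ᵥ g)))
    (hHess : ∀ ξ ∈ segment ℝ x (x + p), ∀ v : Fin ℓ → ℝ,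
        fderiv ℝ (fun y => fderiv ℝ F y v) ξ v ≤ v ⬝ᵥ B *ᵥ v) :
    F (x + p) ≤ F x :=
  doubled_lift_and_projection_descent_general F hF B hBpd x g hg p hp hHess
end
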